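/- Let h(z) = ∑_{k=0}^∞ a_k z^k and g(z) = ∑_{k=1}^∞ b_k z^k be analytic on the unit disk 𝔻 with g(0) = 0, and suppose the harmonic mapping f(z) = h(z) + conj(g(z)) satisfies |f(z)| ≤ 1 for all z ∈ 𝔻. Then for every real p ≥ 1 and every r with 0 ≤ r < 1, ∑_{k=1}^∞ (|a_k|^p + |b_k|^p)^{1/p} · r^k ≤ max{2^{(1/p) − 1/2}, 1} · √(1 − |a_0|²) · r/√(1 − r²). -/

import Mathlib

/-!
On the circle `|z| = ρ < 1`, `f = h + conj g` has the absolutely convergent Fourier expansion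
`∑ₖ aₖ ρᵏ e^{ikθ} + ∑_{k ≥ 1} conj (bₖ) ρᵏ e^{-ikθ}`; because `b₀ = 0` the two halves use disjoint
frequencies, so Bessel's inequality in `L²` of the circle and `|f| ≤ 1` give
`∑ₖ (|aₖ|² + |bₖ|²) ρ^{2k} ≤ 1`. Letting `ρ → 1` yields `|a₀|² + ∑_{k ≥ 1} (|aₖ|² + |bₖ|²) ≤ 1`.
The `ℓᵖ` norm of a pair is at most `max (2^{1/p - 1/2}) 1` times its `ℓ²` norm, and the
Cauchy–Schwarz inequality against the weights `rᵏ`, with `∑_{k ≥ 1} r^{2k} = r² / (1 - r²)`,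
finishes the proof.
-/

open MeasureTheory AddCircle Filter Topology
open scoped InnerProductSpace ComplexConjugate NNReal

theorem Orthonormal.inner_left_eq_of_hasSum {ι 𝕜 E : Type*} [RCLike 𝕜] [NormedAddCommGroup E]
    [InnerProductSpace 𝕜 E] {v : ι → E} (hv : Orthonormal 𝕜 v) {c : ι → 𝕜} {x : E}
    (hx : HasSum (fun i => c i • v i) x) (i : ι) : ⟪v i, x⟫_𝕜 = c i := by
  classical
  refine (hx.mapL (innerSL 𝕜 (v i))).unique ?_
  convert hasSum_ite_eq i (c i) using 2 with j
  rw [innerSL_apply_apply, inner_smul_right, orthonormal_iff_ite.mp hv]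
  split_ifs <;> simp_all [eq_comm]

theorem Orthonormal.summable_and_tsum_norm_sq_le_of_hasSum {ι 𝕜 E : Type*} [RCLike 𝕜]
    [NormedAddCommGroup E] [InnerProductSpace 𝕜 E] {v : ι → E} (hv : Orthonormal 𝕜 v)
    {c : ι → 𝕜} {x : E} (hx : HasSum (fun i => c i • v i) x) :
    Summable (fun i => ‖c i‖ ^ 2) ∧ ∑' i, ‖c i‖ ^ 2 ≤ ‖x‖ ^ 2 := by
  simp_rw [← hv.inner_left_eq_of_hasSum hx]
  exact ⟨hv.inner_products_summable x, hv.tsum_inner_products_le x⟩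

theorem summable_and_tsum_norm_sq_le_of_hasSum_fourier {T : ℝ} [Fact (0 < T)] {c : ℤ → ℂ}
    (hc : Summable c) {F : AddCircle T → ℂ}
    (hF : ∀ x, HasSum (fun n => c n * fourier n x) (F x)) {C : ℝ} (hC : 0 ≤ C)
    (hFC : ∀ x, ‖F x‖ ≤ C) :
    Summable (fun n => ‖c n‖ ^ 2) ∧ ∑' n, ‖c n‖ ^ 2 ≤ C ^ 2 := by
  obtain ⟨S, hS⟩ : Summable (fun n => c n • fourier (T := T) n) :=
    .of_norm (by simpa [norm_smul, fourier_norm] using summable_norm_iff.mpr hc)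
  have hSF : ⇑S = F := funext fun x => (hS.mapL (ContinuousMap.evalCLM ℂ x)).unique (hF x)
  have hSC : ‖S.toLp (E := ℂ) 2 haarAddCircle ℂ‖ ≤ C := by
    have hae : ∀ᵐ x ∂haarAddCircle, ‖S.toLp (E := ℂ) 2 haarAddCircle ℂ x‖ ≤ C := by
      filter_upwards [ContinuousMap.coeFn_toLp (p := 2) (𝕜 := ℂ) haarAddCircle S] with x hx
      rw [hx, hSF]
      exact hFC x
    simpa [measureUnivNNReal] using Lp.norm_le_of_ae_bound hC hae
  have hL2 := orthonormal_fourier.summable_and_tsum_norm_sq_le_of_hasSum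
    (hS.mapL (ContinuousMap.toLp (E := ℂ) 2 haarAddCircle ℂ))
  exact ⟨hL2.1, hL2.2.trans (pow_le_pow_left₀ (norm_nonneg _) hSC 2)⟩

theorem fourier_natCast_apply {T : ℝ} (n : ℕ) (x : AddCircle T) :
    fourier (n : ℤ) x = fourier 1 x ^ n := by
  rw [fourier_apply, natCast_zsmul, AddCircle.toCircle_nsmul, Circle.coe_pow, fourier_one]

theorem fourier_neg_natCast_add_one_apply {T : ℝ} (n : ℕ) (x : AddCircle T) :
    fourier (-(n + 1 : ℤ)) x = conj (fourier 1 x ^ (n + 1)) := by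
  rw [fourier_neg, ← fourier_natCast_apply]; rfl

theorem norm_ofReal_mul_fourier_one {T : ℝ} (ρ : ℝ) (x : AddCircle T) :
    ‖(ρ : ℂ) * fourier 1 x‖ = |ρ| := by
  simp [Circle.norm_coe]

noncomputable def harmonicFourierCoeff (a b : ℕ → ℂ) (ρ : ℝ) : ℤ → ℂ
  | .ofNat k => a k * ρ ^ k
  | .negSucc k => conj (b (k + 1) * ρ ^ (k + 1))

@[simp]
theorem harmonicFourierCoeff_natCast (a b : ℕ → ℂ) (ρ : ℝ) (k : ℕ) :
    harmonicFourierCoeff a b ρ k = a k * ρ ^ k :=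
  rfl

theorem harmonicFourierCoeff_neg_natCast_add_one (a b : ℕ → ℂ) (ρ : ℝ) (k : ℕ) :
    harmonicFourierCoeff a b ρ (-(k + 1)) = conj (b (k + 1) * ρ ^ (k + 1)) :=
  rfl

theorem hasSum_harmonicFourierCoeff_mul_fourier {T : ℝ} {a b : ℕ → ℂ} {h g : ℂ → ℂ}
    (hh : ∀ z : ℂ, ‖z‖ < 1 → HasSum (fun k : ℕ => a k * z ^ k) (h z))
    (hg : ∀ z : ℂ, ‖z‖ < 1 → HasSum (fun k : ℕ => b k * z ^ k) (g z))
    (hb0 : b 0 = 0) {ρ : ℝ} (hρ0 : 0 ≤ ρ) (hρ1 : ρ < 1) (x : AddCircle T) :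
    HasSum (fun n => harmonicFourierCoeff a b ρ n * fourier n x)
      (h (ρ * fourier 1 x) + conj (g (ρ * fourier 1 x))) := by
  have hz : ‖(ρ : ℂ) * fourier 1 x‖ < 1 := by
    rwa [norm_ofReal_mul_fourier_one, abs_of_nonneg hρ0]
  refine .of_nat_of_neg_add_one ?_ ?_
  · convert hh _ hz using 2 with k
    rw [harmonicFourierCoeff_natCast, fourier_natCast_apply]
    ring
  · have hg' := (hasSum_nat_add_iff' 1).mpr (hg _ hz)
    simp only [Finset.sum_range_one, pow_zero, hb0, zero_mul, sub_zero] at hg'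
    convert Complex.hasSum_conj'.mpr hg' using 2 with k
    rw [harmonicFourierCoeff_neg_natCast_add_one, fourier_neg_natCast_add_one_apply]
    simp only [map_mul, map_pow, Complex.conj_ofReal]
    ring

theorem summable_and_tsum_coeff_sq_mul_pow_le_one {a b : ℕ → ℂ} {h g : ℂ → ℂ}
    (hh : ∀ z : ℂ, ‖z‖ < 1 → HasSum (fun k : ℕ => a k * z ^ k) (h z))
    (hg : ∀ z : ℂ, ‖z‖ < 1 → HasSum (fun k : ℕ => b k * z ^ k) (g z))
    (hb0 : b 0 = 0)
    (hbound : ∀ z : ℂ, ‖z‖ < 1 → ‖h z + conj (g z)‖ ≤ 1)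
    {ρ : ℝ} (hρ0 : 0 ≤ ρ) (hρ1 : ρ < 1) :
    Summable (fun k => (‖a k‖ ^ 2 + ‖b k‖ ^ 2) * (ρ ^ 2) ^ k) ∧
      ∑' k, (‖a k‖ ^ 2 + ‖b k‖ ^ 2) * (ρ ^ 2) ^ k ≤ 1 := by
  set c := harmonicFourierCoeff a b ρ
  have hF := hasSum_harmonicFourierCoeff_mul_fourier (T := 1) hh hg hb0 hρ0 hρ1
  have hc : Summable c := by simpa [fourier_eval_zero] using (hF 0).summable
  obtain ⟨hs, hle⟩ := summable_and_tsum_norm_sq_le_of_hasSum_fourier hc hF zero_le_one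
    fun x => hbound _ (by rwa [norm_ofReal_mul_fourier_one, abs_of_nonneg hρ0])
  set u : ℕ → ℝ := fun k => ‖a k‖ ^ 2 * (ρ ^ 2) ^ k
  set v : ℕ → ℝ := fun k => ‖b k‖ ^ 2 * (ρ ^ 2) ^ k
  have hcu : ∀ k : ℕ, ‖c k‖ ^ 2 = u k := fun k => by
    simp [c, u, abs_of_nonneg hρ0, mul_pow, ← pow_mul, mul_comm 2]
  have hcv : ∀ k : ℕ, ‖c (-(k + 1))‖ ^ 2 = v (k + 1) := fun k => by
    simp only [c, harmonicFourierCoeff_neg_natCast_add_one]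
    simp [v, abs_of_nonneg hρ0, mul_pow, ← pow_mul, mul_comm 2]
  have hu : Summable u := (hs.comp_injective Nat.cast_injective).congr hcu
  have hv : Summable (fun k => v (k + 1)) :=
    (hs.comp_injective (i := fun k : ℕ => -(k + 1 : ℤ)) fun m n hmn => by simpa using hmn).congr hcv
  have hv' : Summable v := (summable_nat_add_iff 1).mp hv
  have hsplit : ∑' n, ‖c n‖ ^ 2 = ∑' k, u k + ∑' k, v k := by
    rw [tsum_of_nat_of_neg_add_one (hu.congr fun k => (hcu k).symm)
      (hv.congr fun k => (hcv k).symm), hv'.tsum_eq_zero_add]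
    simp only [hcu, hcv]
    simp [v, hb0]
  have huv : (fun k => (‖a k‖ ^ 2 + ‖b k‖ ^ 2) * (ρ ^ 2) ^ k) = fun k => u k + v k :=
    funext fun k => add_mul ..
  rw [huv, hu.tsum_add hv']
  exact ⟨hu.add hv', by simpa [hsplit] using hle⟩

theorem summable_and_tsum_le_of_tsum_mul_pow_le {s : ℕ → ℝ} (hs : ∀ k, 0 ≤ s k) {C : ℝ}
    (h : ∀ x, 0 ≤ x → x < 1 → Summable (fun k => s k * x ^ k) ∧ ∑' k, s k * x ^ k ≤ C) :
    Summable s ∧ ∑' k, s k ≤ C := by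
  have hpartial : ∀ N, ∑ k ∈ Finset.range N, s k ≤ C := by
    intro N
    have hlim : Tendsto (fun x : ℝ => ∑ k ∈ Finset.range N, s k * x ^ k) (𝓝[<] 1)
        (𝓝 (∑ k ∈ Finset.range N, s k * 1 ^ k)) :=
      ((by fun_prop : Continuous fun x : ℝ => ∑ k ∈ Finset.range N, s k * x ^ k).tendsto 1).mono_left
        nhdsWithin_le_nhds
    have hbelow : ∀ᶠ x in 𝓝[<] (1 : ℝ), ∑ k ∈ Finset.range N, s k * x ^ k ≤ C := by
      filter_upwards [Ioo_mem_nhdsLT zero_lt_one] with x hx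
      obtain ⟨hsum, hle⟩ := h x hx.1.le hx.2
      exact (hsum.sum_le_tsum _ fun k _ => mul_nonneg (hs k) (pow_nonneg hx.1.le k)).trans hle
    simpa using le_of_tendsto hlim hbelow
  exact ⟨summable_of_sum_range_le hs hpartial, Real.tsum_le_of_sum_range_le hs hpartial⟩

theorem summable_and_tsum_coeff_sq_le_one_sub {a b : ℕ → ℂ} {h g : ℂ → ℂ}
    (hh : ∀ z : ℂ, ‖z‖ < 1 → HasSum (fun k : ℕ => a k * z ^ k) (h z))
    (hg : ∀ z : ℂ, ‖z‖ < 1 → HasSum (fun k : ℕ => b k * z ^ k) (g z))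
    (hb0 : b 0 = 0)
    (hbound : ∀ z : ℂ, ‖z‖ < 1 → ‖h z + conj (g z)‖ ≤ 1) :
    Summable (fun k => ‖a (k + 1)‖ ^ 2 + ‖b (k + 1)‖ ^ 2) ∧
      ∑' k, (‖a (k + 1)‖ ^ 2 + ‖b (k + 1)‖ ^ 2) ≤ 1 - ‖a 0‖ ^ 2 := by
  obtain ⟨hs, hle⟩ := summable_and_tsum_le_of_tsum_mul_pow_le
    (s := fun k => ‖a k‖ ^ 2 + ‖b k‖ ^ 2) (fun k => by positivity) fun x hx0 hx1 => by
      simpa [Real.sq_sqrt hx0] using summable_and_tsum_coeff_sq_mul_pow_le_one hh hg hb0 hbound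
        (Real.sqrt_nonneg x) ((Real.sqrt_lt' one_pos).2 (by simpa using hx1))
  rw [hs.tsum_eq_zero_add, hb0] at hle
  exact ⟨(summable_nat_add_iff 1).mpr hs, by simp only [norm_zero] at hle; linarith⟩

theorem rpow_add_rpow_one_div_le_max_mul_sqrt {x y p : ℝ} (hx : 0 ≤ x) (hy : 0 ≤ y)
    (hp : 1 ≤ p) :
    (x ^ p + y ^ p) ^ (1 / p) ≤ max (2 ^ (1 / p - 1 / 2)) 1 * √(x ^ 2 + y ^ 2) := by
  have hp0 : 0 < p := by linarith
  rw [Real.sqrt_eq_rpow, ← Real.rpow_two x, ← Real.rpow_two y]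
  rcases le_total 2 p with h2p | hp2
  · calc (x ^ p + y ^ p) ^ (1 / p) ≤ (x ^ (2 : ℝ) + y ^ (2 : ℝ)) ^ (1 / (2 : ℝ)) :=
          Real.rpow_add_rpow_le hx hy two_pos h2p
      _ ≤ _ := le_mul_of_one_le_left (by positivity) (le_max_right _ _)
  · have hq : 1 ≤ 2 / p := by rw [le_div_iff₀ hp0]; linarith
    have hmean : (x ^ p + y ^ p) ^ (2 / p) ≤ 2 ^ (2 / p - 1) * (x ^ (2 : ℝ) + y ^ (2 : ℝ)) := by
      lift x to ℝ≥0 using hx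
      lift y to ℝ≥0 using hy
      have := NNReal.rpow_add_le_mul_rpow_add_rpow (x ^ p) (y ^ p) hq
      rw [← NNReal.rpow_mul, ← NNReal.rpow_mul, mul_div_cancel₀ _ hp0.ne'] at this
      exact_mod_cast this
    calc (x ^ p + y ^ p) ^ (1 / p) = ((x ^ p + y ^ p) ^ (2 / p)) ^ (1 / 2 : ℝ) := by
          rw [← Real.rpow_mul (by positivity)]; ring_nf
      _ ≤ (2 ^ (2 / p - 1) * (x ^ (2 : ℝ) + y ^ (2 : ℝ))) ^ (1 / 2 : ℝ) := by gcongr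
      _ = 2 ^ (1 / p - 1 / 2) * (x ^ (2 : ℝ) + y ^ (2 : ℝ)) ^ (1 / 2 : ℝ) := by
          rw [Real.mul_rpow (by positivity) (by positivity), ← Real.rpow_mul zero_le_two]
          ring_nf
      _ ≤ _ := by gcongr; exact le_max_left _ _

theorem summable_and_tsum_sqrt_mul_sqrt_le {ι : Type*} {f g : ι → ℝ} (hf : ∀ i, 0 ≤ f i)
    (hg : ∀ i, 0 ≤ g i) (hfs : Summable f) (hgs : Summable g) :
    Summable (fun i => √(f i) * √(g i)) ∧
      ∑' i, √(f i) * √(g i) ≤ √(∑' i, f i) * √(∑' i, g i) := by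
  have hfin : ∀ s : Finset ι, ∑ i ∈ s, √(f i) * √(g i) ≤ √(∑' i, f i) * √(∑' i, g i) :=
    fun s => (Real.sum_sqrt_mul_sqrt_le s hf hg).trans <| by
      gcongr
      exacts [hfs.sum_le_tsum _ fun i _ => hf i, hgs.sum_le_tsum _ fun i _ => hg i]
  have hsum := summable_of_sum_le (fun i => by positivity) hfin
  exact ⟨hsum, hsum.tsum_le_of_sum_le hfin⟩

theorem summable_and_tsum_sqrt_mul_pow_succ_le {t : ℕ → ℝ} (ht : ∀ k, 0 ≤ t k)
    (hts : Summable t) {r : ℝ} (hr0 : 0 ≤ r) (hr1 : r < 1) :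
    Summable (fun k => √(t k) * r ^ (k + 1)) ∧
      ∑' k, √(t k) * r ^ (k + 1) ≤ √(∑' k, t k) * (r / √(1 - r ^ 2)) := by
  have hgeom : HasSum (fun k => (r ^ 2) ^ (k + 1)) (r ^ 2 / (1 - r ^ 2)) := by
    have hr2 : r ^ 2 < 1 := by nlinarith
    have := (hasSum_geometric_of_lt_one (sq_nonneg r) hr2).mul_left (r ^ 2)
    rwa [← div_eq_mul_inv, funext fun k => (pow_succ' (r ^ 2) k).symm] at this
  have hsqrt : ∀ k, √((r ^ 2) ^ (k + 1)) = r ^ (k + 1) := fun k => by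
    rw [← pow_mul, mul_comm, pow_mul, Real.sqrt_sq (by positivity)]
  obtain ⟨hs, hle⟩ := summable_and_tsum_sqrt_mul_sqrt_le ht (fun k => by positivity) hts
    hgeom.summable
  simp only [hsqrt, hgeom.tsum_eq] at hs hle
  refine ⟨hs, hle.trans_eq ?_⟩
  rw [Real.sqrt_div (sq_nonneg r), Real.sqrt_sq hr0]

/-- Theorem 3 of Kayumov–Ponnusamy: `p`-Bohr-type estimate for a bounded harmonic
mapping `f = h + conj g` of the unit disk with `g(0) = 0`. -/
theorem harmonic_p_bohr_estimate
    (a b : ℕ → ℂ) (h g : ℂ → ℂ)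
    (hh : ∀ z : ℂ, ‖z‖ < 1 → HasSum (fun k : ℕ => a k * z ^ k) (h z))
    (hg : ∀ z : ℂ, ‖z‖ < 1 → HasSum (fun k : ℕ => b k * z ^ k) (g z))
    (hb0 : b 0 = 0)
    (hbound : ∀ z : ℂ, ‖z‖ < 1 → ‖h z + (starRingEnd ℂ) (g z)‖ ≤ 1) :
    ∀ p : ℝ, 1 ≤ p → ∀ r : ℝ, 0 ≤ r → r < 1 →
      (∑' k : ℕ, (‖a (k + 1)‖ ^ p + ‖b (k + 1)‖ ^ p) ^ (1 / p) * r ^ (k + 1))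
        ≤ max ((2 : ℝ) ^ (1 / p - 1 / 2)) 1 *
            Real.sqrt (1 - ‖a 0‖ ^ 2) * (r / Real.sqrt (1 - r ^ 2)) := by
  intro p hp r hr0 hr1
  set M := max ((2 : ℝ) ^ (1 / p - 1 / 2)) 1
  obtain ⟨hts, htle⟩ := summable_and_tsum_coeff_sq_le_one_sub hh hg hb0 hbound
  obtain ⟨hs, hle⟩ := summable_and_tsum_sqrt_mul_pow_succ_le (fun k => by positivity) hts hr0 hr1
  have hterm : ∀ k, (‖a (k + 1)‖ ^ p + ‖b (k + 1)‖ ^ p) ^ (1 / p) * r ^ (k + 1) ≤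
      M * (√(‖a (k + 1)‖ ^ 2 + ‖b (k + 1)‖ ^ 2) * r ^ (k + 1)) := fun k => by
    rw [← mul_assoc]
    gcongr
    exact rpow_add_rpow_one_div_le_max_mul_sqrt (norm_nonneg _) (norm_nonneg _) hp
  have hM : 0 ≤ M := zero_le_one.trans (le_max_right _ _)
  calc _ ≤ ∑' k, M * (√(‖a (k + 1)‖ ^ 2 + ‖b (k + 1)‖ ^ 2) * r ^ (k + 1)) :=
        (Summable.of_nonneg_of_le (fun k => by positivity) hterm (hs.mul_left M)).tsum_le_tsum
          hterm (hs.mul_left M)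
    _ = M * ∑' k, √(‖a (k + 1)‖ ^ 2 + ‖b (k + 1)‖ ^ 2) * r ^ (k + 1) := tsum_mul_left
    _ ≤ M * (√(1 - ‖a 0‖ ^ 2) * (r / √(1 - r ^ 2))) := by
        gcongr
        exact hle.trans (by gcongr)
    _ = _ := by ring
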